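/- Sufficiency of the sparsity bound: if rank(C·W) = n and s ≥ min{m, max_{0 ≤ i ≤ N−1} R_i} with R_i = rank(C A^i W) − rank(C A^{i+1} W), then the system (A,B,C) is output s-sparse controllable. -/

import Mathlib

/-!
Let `V_e` be the span of the columns of `C A^f B` over all lags `f ≥ e`. An input applied `f`
steps before the final time contributes a combination of the columns of `C A^f B`, so it suffices
to cover `V_0` by columns, at most `s` of them per lag. By Cayley–Hamilton, `V_e` is the column
space of `C A^e W`, so `dim V_e = rank (C A^e W)` and `V_0` is the whole output space.

For `e < N`, `V_e = span (columns of C A^e B) + V_{e+1}`, and a greedy choice completes `V_{e+1}`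
to `V_e` with at most `min (m, R_e) ≤ s` columns of lag `e`. From lag `N` on the chain is
constant: it is the image under `C` of the analogous chain in state space, each term of which is
the image of the previous one under `A`, so that chain stops decreasing within `N` steps. Hence
every tail of lags still spans `V_N`, and `V_N` is covered greedily with a single column per lag;
this is where `s ≥ 1` is needed.
-/

open Matrix

/-- The controllability matrix `W = [A^{N−1}B, …, B]` of the pair `(A, B)`. -/
def ctrbMat {N m : ℕ} (A : Matrix (Fin N) (Fin N) ℝ) (B : Matrix (Fin N) (Fin m) ℝ) :
    Matrix (Fin N) (Fin N × Fin m) ℝ :=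
  fun i p => (A ^ (N - 1 - (p.1 : ℕ)) * B) i p.2

/-- Output `s`-sparse controllability: every target output is reachable from every
initial state in finite time using inputs each with at most `s` nonzero entries. -/
def OutputSparseControllable {N m n : ℕ} (A : Matrix (Fin N) (Fin N) ℝ)
    (B : Matrix (Fin N) (Fin m) ℝ) (C : Matrix (Fin n) (Fin N) ℝ) (s : ℕ) : Prop :=
  ∀ x0 : Fin N → ℝ, ∀ yf : Fin n → ℝ, ∃ K : ℕ, 0 < K ∧ ∃ u : Fin K → Fin m → ℝ,
    (∀ k, (Function.support (u k)).ncard ≤ s) ∧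
    C.mulVec ((∑ k : Fin K, (A ^ (K - 1 - (k : ℕ))).mulVec (B.mulVec (u k)))
      + (A ^ K).mulVec x0) = yf

open Submodule Module Finset Function

theorem Matrix.pow_mem_span_pow_lt_card {R n : Type*} [CommRing R] [Nontrivial R] [Fintype n]
    [DecidableEq n] (A : Matrix n n R) (g : ℕ) :
    A ^ g ∈ span R ((A ^ ·) '' ↑(range (Fintype.card n))) := by
  classical
  have hdeg : Polynomial.X ^ g %ₘ A.charpoly ∈ Polynomial.degreeLT R (Fintype.card n) := by
    rw [Polynomial.mem_degreeLT, ← A.charpoly_degree_eq_dim]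
    exact Polynomial.degree_modByMonic_lt _ A.charpoly_monic
  rw [Polynomial.degreeLT_eq_span_X_pow] at hdeg
  have := mem_map_of_mem (f := (Polynomial.aeval A).toLinearMap) hdeg
  rw [map_span, coe_image, Set.image_image] at this
  simpa [← A.pow_eq_aeval_mod_charpoly] using this

theorem Matrix.col_mul {R l m n : Type*} [NonUnitalNonAssocSemiring R] [Fintype m]
    (M : Matrix l m R) (M' : Matrix m n R) (j : n) : (M * M').col j = M *ᵥ M'.col j :=
  rfl

theorem Matrix.sum_smul_col {R m n : Type*} [CommSemiring R] [Fintype n] (M : Matrix m n R)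
    (v : n → R) : ∑ j, v j • M.col j = M *ᵥ v := by
  simp only [mulVec_eq_sum, op_smul_eq_smul]
  rfl

namespace SparseControllability

section Abstract

variable {𝕜 V ι : Type*} [Field 𝕜] [AddCommGroup V] [Module 𝕜 V]

variable (𝕜) in
def tailSpan (a : ℕ → ι → V) (e : ℕ) : Submodule 𝕜 V :=
  span 𝕜 {v | ∃ f ≥ e, ∃ j, a f j = v}

variable (𝕜) in
/-- `D f` is the set of input channels allowed to be active `f` steps before the final time. -/
def selectedSpan (a : ℕ → ι → V) (D : ℕ → Finset ι) (L : Finset ℕ) : Submodule 𝕜 V :=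
  ⨆ f ∈ L, span 𝕜 (a f '' D f)

theorem apply_mem_tailSpan (a : ℕ → ι → V) {e f : ℕ} (h : e ≤ f) (j : ι) :
    a f j ∈ tailSpan 𝕜 a e :=
  subset_span ⟨f, h, j, rfl⟩

theorem tailSpan_antitone (a : ℕ → ι → V) : Antitone (tailSpan 𝕜 a) :=
  fun _ _ h => span_mono fun _ ⟨f, hf, j, hv⟩ => ⟨f, h.trans hf, j, hv⟩

theorem tailSpan_le_span_range_sup (a : ℕ → ι → V) (e : ℕ) :
    tailSpan 𝕜 a e ≤ span 𝕜 (Set.range (a e)) ⊔ tailSpan 𝕜 a (e + 1) := by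
  refine span_le.2 ?_
  rintro _ ⟨f, hf, j, rfl⟩
  rcases hf.eq_or_lt with rfl | hlt
  · exact mem_sup_left (subset_span ⟨j, rfl⟩)
  · exact mem_sup_right (apply_mem_tailSpan a hlt j)

theorem map_tailSpan {V' : Type*} [AddCommGroup V'] [Module 𝕜 V'] (g : V →ₗ[𝕜] V')
    (a : ℕ → ι → V) (e : ℕ) :
    (tailSpan 𝕜 a e).map g = tailSpan 𝕜 (fun f j => g (a f j)) e := by
  rw [tailSpan, tailSpan, map_span]
  congr 1
  ext
  simp

theorem tailSpan_succ (a : ℕ → ι → V) (e : ℕ) :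
    tailSpan 𝕜 a (e + 1) = tailSpan 𝕜 (fun f => a (f + 1)) e := by
  rw [tailSpan, tailSpan]
  congr 1
  ext v
  constructor
  · rintro ⟨f, hf, j, rfl⟩
    exact ⟨f - 1, by omega, j, by rw [Nat.sub_add_cancel (by omega)]⟩
  · rintro ⟨f, hf, j, rfl⟩
    exact ⟨f + 1, by omega, j, rfl⟩

theorem exists_le_apply_succ_eq_of_antitone {d : ℕ → ℕ} (hd : Antitone d) :
    ∃ e ≤ d 0, d (e + 1) = d e := by
  by_contra! h
  have key : ∀ e ≤ d 0 + 1, d e + e ≤ d 0 := by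
    intro e
    induction e with
    | zero => simp
    | succ e ih =>
      intro he
      have := lt_of_le_of_ne (hd (Nat.le_add_right e 1)) (h e (by omega))
      have := ih (by omega)
      omega
  have := key (d 0 + 1) le_rfl
  omega

theorem tailSpan_eq_of_finrank_le [FiniteDimensional 𝕜 V] (T : V →ₗ[𝕜] V) (b : ℕ → ι → V)
    (hb : ∀ f j, b (f + 1) j = T (b f j)) {f : ℕ} (hf : finrank 𝕜 V ≤ f) :
    tailSpan 𝕜 b f = tailSpan 𝕜 b (finrank 𝕜 V) := by
  have hmap : ∀ e, tailSpan 𝕜 b (e + 1) = (tailSpan 𝕜 b e).map T := fun e => by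
    rw [map_tailSpan, tailSpan_succ]
    exact congrArg (tailSpan 𝕜 · e) (funext₂ hb)
  obtain ⟨e, he, heq⟩ := exists_le_apply_succ_eq_of_antitone
    (d := fun e => finrank 𝕜 (tailSpan 𝕜 b e)) fun _ _ h => finrank_mono (tailSpan_antitone b h)
  have hstep : tailSpan 𝕜 b (e + 1) = tailSpan 𝕜 b e :=
    eq_of_le_of_finrank_eq (tailSpan_antitone b e.le_succ) heq
  have hconst : ∀ f ≥ e, tailSpan 𝕜 b f = tailSpan 𝕜 b e :=
    Nat.le_induction rfl fun f _ ih => by rw [hmap, ih, ← hmap, hstep]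
  have heV : e ≤ finrank 𝕜 V := he.trans (finrank_le _)
  rw [hconst f (heV.trans hf), hconst _ heV]

theorem exists_notMem_of_le_span_sup {G : Set V} {W M : Submodule 𝕜 V}
    (hW : W ≤ span 𝕜 G ⊔ M) (hWM : ¬W ≤ M) : ∃ g ∈ G, g ∉ M := by
  by_contra! h
  exact hWM (hW.trans (sup_le (span_le.2 h) le_rfl))

theorem exists_finset_card_le_le_span_image_sup [FiniteDimensional 𝕜 V] (w : ι → V)
    {W M : Submodule 𝕜 V} (hw : ∀ j, w j ∈ W) (hMW : M ≤ W)
    (hW : W ≤ span 𝕜 (Set.range w) ⊔ M) :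
    ∃ S : Finset ι, #S ≤ finrank 𝕜 W - finrank 𝕜 M ∧ W ≤ span 𝕜 (w '' S) ⊔ M := by
  classical
  suffices h : ∀ k, ∀ M ≤ W, W ≤ span 𝕜 (Set.range w) ⊔ M → finrank 𝕜 W ≤ finrank 𝕜 M + k →
      ∃ S : Finset ι, #S ≤ k ∧ W ≤ span 𝕜 (w '' S) ⊔ M from
    h _ M hMW hW (by omega)
  intro k
  induction k with
  | zero =>
    intro M hMW _ hk
    exact ⟨∅, by simp, (eq_of_le_of_finrank_le hMW (by omega)).ge.trans le_sup_right⟩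
  | succ k ih =>
    intro M hMW hW hk
    by_cases hWM : W ≤ M
    · exact ⟨∅, by simp, hWM.trans le_sup_right⟩
    obtain ⟨_, ⟨j, rfl⟩, hj⟩ := exists_notMem_of_le_span_sup hW hWM
    have hlt : M < M ⊔ 𝕜 ∙ w j := lt_sup_iff_notMem.2 hj
    obtain ⟨S, hS, hcover⟩ := ih (M ⊔ 𝕜 ∙ w j)
      (sup_le hMW ((span_singleton_le_iff_mem _ _).2 (hw j)))
      (hW.trans (sup_le_sup_left le_sup_left _))
      (by have := Submodule.finrank_lt_finrank_of_lt hlt; omega)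
    refine ⟨insert j S, (card_insert_le j S).trans (by omega), hcover.trans (le_of_eq ?_)⟩
    rw [coe_insert, Set.image_insert_eq, span_insert]
    ac_rfl

theorem span_image_sup_selectedSpan_le (a : ℕ → ι → V) (D : ℕ → Finset ι) (S : Finset ι)
    {E e K K' : ℕ} (hE : E ≤ e) (he : e < K') (hK : K ≤ K') :
    span 𝕜 (a e '' S) ⊔ selectedSpan 𝕜 a D (Ico (e + 1) K) ≤
      selectedSpan 𝕜 a (update D e S) (Ico E K') := by
  refine sup_le ?_ (iSup₂_le fun f hf => ?_)
  · exact le_iSup₂_of_le (f := fun f (_ : f ∈ Ico E K') => span 𝕜 (a f '' update D e S f))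
      e (mem_Ico.2 ⟨hE, he⟩) (by rw [update_self])
  · obtain ⟨hf₁, hf₂⟩ := mem_Ico.1 hf
    exact le_iSup₂_of_le (f := fun f (_ : f ∈ Ico E K') => span 𝕜 (a f '' update D e S f))
      f (mem_Ico.2 ⟨by omega, by omega⟩) (by rw [update_of_ne (by omega)])

theorem exists_card_le_one_tailSpan_le_selectedSpan [FiniteDimensional 𝕜 V] (a : ℕ → ι → V)
    {N : ℕ} (hstab : ∀ f ≥ N, tailSpan 𝕜 a f = tailSpan 𝕜 a N) :
    ∃ K, N < K ∧ ∃ D : ℕ → Finset ι, (∀ f, #(D f) ≤ 1) ∧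
      tailSpan 𝕜 a N ≤ selectedSpan 𝕜 a D (Ico N K) := by
  set W := tailSpan 𝕜 a N
  suffices h : ∀ k, ∀ M ≤ W, ∀ E ≥ N, finrank 𝕜 W ≤ finrank 𝕜 M + k →
      ∃ K, E < K ∧ ∃ D : ℕ → Finset ι, (∀ f, #(D f) ≤ 1) ∧ W ≤ selectedSpan 𝕜 a D (Ico E K) ⊔ M by
    simpa using h (finrank 𝕜 W) ⊥ bot_le N le_rfl (by simp)
  intro k
  induction k with
  | zero =>
    intro M hMW E hE hk
    exact ⟨E + 1, by omega, fun _ => ∅, by simp,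
      (eq_of_le_of_finrank_le hMW (by omega)).ge.trans le_sup_right⟩
  | succ k ih =>
    intro M hMW E hE hk
    by_cases hWM : W ≤ M
    · exact ⟨E + 1, by omega, fun _ => ∅, by simp, hWM.trans le_sup_right⟩
    -- every tail spans `W`, so a column outside `M` exists at a lag beyond all earlier choices
    have hW : W ≤ span 𝕜 {v | ∃ f ≥ E, ∃ j, a f j = v} ⊔ M := (hstab E hE).ge.trans le_sup_left
    obtain ⟨_, ⟨f, hf, j, rfl⟩, hj⟩ := exists_notMem_of_le_span_sup hW hWM
    have hfW : a f j ∈ W := hstab f (by omega) ▸ apply_mem_tailSpan a le_rfl j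
    have hlt : M < M ⊔ 𝕜 ∙ a f j := lt_sup_iff_notMem.2 hj
    obtain ⟨K, hK, D, hD, hcover⟩ := ih (M ⊔ 𝕜 ∙ a f j)
      (sup_le hMW ((span_singleton_le_iff_mem _ _).2 hfW)) (f + 1) (by omega)
      (by have := Submodule.finrank_lt_finrank_of_lt hlt; omega)
    refine ⟨max K (f + 1), by omega, update D f {j}, fun f' => ?_, ?_⟩
    · rcases eq_or_ne f' f with rfl | hf'
      · simp
      · simp [hf', hD]
    calc W ≤ selectedSpan 𝕜 a D (Ico (f + 1) K) ⊔ (M ⊔ 𝕜 ∙ a f j) := hcover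
      _ = (span 𝕜 (a f '' ↑({j} : Finset ι)) ⊔ selectedSpan 𝕜 a D (Ico (f + 1) K)) ⊔ M := by
        rw [coe_singleton, Set.image_singleton]
        ac_rfl
      _ ≤ _ := sup_le_sup_right (span_image_sup_selectedSpan_le a D {j} hf (by omega)
        (le_max_left _ _)) M

theorem exists_card_le_tailSpan_zero_le_selectedSpan [FiniteDimensional 𝕜 V] [Fintype ι]
    (a : ℕ → ι → V) {N s : ℕ} (hs : 0 < s) (hstab : ∀ f ≥ N, tailSpan 𝕜 a f = tailSpan 𝕜 a N)
    (hcap : ∀ e < N,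
      min (Fintype.card ι) (finrank 𝕜 (tailSpan 𝕜 a e) - finrank 𝕜 (tailSpan 𝕜 a (e + 1))) ≤ s) :
    ∃ K, 0 < K ∧ ∃ D : ℕ → Finset ι, (∀ f, #(D f) ≤ s) ∧
      tailSpan 𝕜 a 0 ≤ selectedSpan 𝕜 a D (range K) := by
  suffices h : ∀ e ≤ N, ∃ K, e < K ∧ ∃ D : ℕ → Finset ι, (∀ f, #(D f) ≤ s) ∧
      tailSpan 𝕜 a e ≤ selectedSpan 𝕜 a D (Ico e K) by
    simpa [← range_eq_Ico] using h 0 (Nat.zero_le N)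
  intro e he
  induction he using Nat.decreasingInduction with
  | self =>
    obtain ⟨K, hK, D, hD, hcover⟩ := exists_card_le_one_tailSpan_le_selectedSpan a hstab
    exact ⟨K, hK, D, fun f => (hD f).trans hs, hcover⟩
  | of_succ e he ih =>
    obtain ⟨K, hK, D, hD, hcover⟩ := ih
    obtain ⟨S, hS, hSspan⟩ := exists_finset_card_le_le_span_image_sup (a e)
      (apply_mem_tailSpan (𝕜 := 𝕜) a le_rfl) (tailSpan_antitone a e.le_succ)
      (tailSpan_le_span_range_sup a e)
    refine ⟨K, by omega, update D e S, fun f => ?_, ?_⟩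
    · rcases eq_or_ne f e with rfl | hf
      · simpa using (le_min (card_le_univ S) hS).trans (hcap f he)
      · simp [hf, hD]
    calc tailSpan 𝕜 a e ≤ span 𝕜 (a e '' S) ⊔ tailSpan 𝕜 a (e + 1) := hSspan
      _ ≤ span 𝕜 (a e '' S) ⊔ selectedSpan 𝕜 a D (Ico (e + 1) K) := sup_le_sup_left hcover _
      _ ≤ _ := span_image_sup_selectedSpan_le a D S le_rfl (by omega) le_rfl

theorem exists_sum_eq_of_mem_selectedSpan [Fintype ι] {a : ℕ → ι → V} {D : ℕ → Finset ι}
    {L : Finset ℕ} {z : V} (hz : z ∈ selectedSpan 𝕜 a D L) :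
    ∃ u : ℕ → ι → 𝕜, (∀ f, support (u f) ⊆ D f) ∧ ∑ f ∈ L, ∑ j, u f j • a f j = z := by
  obtain ⟨μ, rfl⟩ := (mem_iSup_finset_iff_exists_sum _ z).1 hz
  have hμ : ∀ f, ∃ l : ι →₀ 𝕜, (l.support : Set ι) ⊆ D f ∧ ∑ j, l j • a f j = μ f := fun f => by
    obtain ⟨l, hl, hsum⟩ := (Finsupp.mem_span_image_iff_linearCombination 𝕜).1 (μ f).2
    exact ⟨l, hl, by
      simp [← hsum, Finsupp.linearCombination_apply, Finsupp.sum_fintype]⟩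
  choose l hl hsum using hμ
  exact ⟨fun f => l f, fun f => by simpa [Finsupp.fun_support_eq] using hl f,
    sum_congr rfl fun f _ => hsum f⟩

end Abstract

section Matrix

variable {N m n : ℕ} (A : Matrix (Fin N) (Fin N) ℝ) (B : Matrix (Fin N) (Fin m) ℝ)
  (C : Matrix (Fin n) (Fin N) ℝ)

theorem col_mul_ctrbMat {k : ℕ} (M : Matrix (Fin k) (Fin N) ℝ) (p : Fin N × Fin m) :
    (M * ctrbMat A B).col p = (M * A ^ (N - 1 - (p.1 : ℕ)) * B).col p.2 := by
  rw [Matrix.mul_assoc]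
  rfl

theorem col_mul_mem_span_col_mul_ctrbMat (e : ℕ) (j : Fin m) {M : Matrix (Fin N) (Fin N) ℝ}
    (hM : M ∈ span ℝ ((A ^ ·) '' ↑(range N))) :
    (C * A ^ e * M * B).col j ∈ span ℝ (Set.range (C * A ^ e * ctrbMat A B).col) := by
  induction hM using span_induction with
  | mem M hM =>
    obtain ⟨i, hi, rfl⟩ := hM
    rw [coe_range, Set.mem_Iio] at hi
    refine subset_span ⟨(⟨N - 1 - i, by omega⟩, j), ?_⟩
    change (C * A ^ e * ctrbMat A B).col (⟨N - 1 - i, _⟩, j) = (C * A ^ e * A ^ i * B).col j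
    rw [col_mul_ctrbMat, Nat.sub_sub_self (by omega)]
  | zero =>
    rw [Matrix.mul_zero, Matrix.zero_mul]
    exact zero_mem _
  | add M M' _ _ hM hM' =>
    rw [Matrix.mul_add, Matrix.add_mul]
    exact add_mem hM hM'
  | smul c M _ hM =>
    rw [Matrix.mul_smul, Matrix.smul_mul]
    exact smul_mem _ c hM

theorem tailSpan_eq_span_col_mul_ctrbMat (e : ℕ) :
    tailSpan ℝ (fun f => (C * A ^ f * B).col) e =
      span ℝ (Set.range (C * A ^ e * ctrbMat A B).col) := by
  apply le_antisymm
  · refine span_le.2 ?_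
    rintro _ ⟨f, hf, j, rfl⟩
    obtain ⟨g, rfl⟩ := Nat.exists_eq_add_of_le hf
    simpa [pow_add, Matrix.mul_assoc] using col_mul_mem_span_col_mul_ctrbMat A B C e j
      (by simpa using A.pow_mem_span_pow_lt_card g)
  · refine span_le.2 ?_
    rintro _ ⟨p, rfl⟩
    rw [col_mul_ctrbMat, Matrix.mul_assoc C, ← pow_add]
    exact apply_mem_tailSpan _ (Nat.le_add_right _ _) _

theorem finrank_tailSpan_col (e : ℕ) :
    finrank ℝ (tailSpan ℝ (fun f => (C * A ^ f * B).col) e) = (C * A ^ e * ctrbMat A B).rank := by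
  rw [tailSpan_eq_span_col_mul_ctrbMat, rank_eq_finrank_span_cols]

theorem tailSpan_col_eq_of_le {f : ℕ} (hf : N ≤ f) :
    tailSpan ℝ (fun f => (C * A ^ f * B).col) f = tailSpan ℝ (fun f => (C * A ^ f * B).col) N := by
  have hout : ∀ e, tailSpan ℝ (fun f => (C * A ^ f * B).col) e =
      (tailSpan ℝ (fun f => (A ^ f * B).col) e).map C.mulVecLin := fun e => by
    rw [map_tailSpan]
    simp only [Matrix.mulVecLin_apply, ← Matrix.col_mul, Matrix.mul_assoc]
  have hstate := tailSpan_eq_of_finrank_le A.mulVecLin (fun f => (A ^ f * B).col)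
    (fun f j => by
      simp only [Matrix.mulVecLin_apply, ← Matrix.col_mul, pow_succ', Matrix.mul_assoc])
    (f := f) (by rwa [finrank_fin_fun])
  rw [hout, hout, hstate, finrank_fin_fun]

theorem mulVec_sum_pow_mulVec_rev_eq_sum_smul_col (K : ℕ) (u : ℕ → Fin m → ℝ) :
    C *ᵥ ∑ k : Fin K, A ^ (K - 1 - (k : ℕ)) *ᵥ (B *ᵥ u (K - 1 - k)) =
      ∑ f ∈ range K, ∑ j, u f j • (C * A ^ f * B).col j := by
  rw [mulVec_sum, ← sum_range_reflect, Fin.sum_univ_eq_sum_range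
    (fun k => C *ᵥ (A ^ (K - 1 - k) *ᵥ (B *ᵥ u (K - 1 - k))))]
  simp only [Matrix.sum_smul_col, mulVec_mulVec, Matrix.mul_assoc]

end Matrix

end SparseControllability

open SparseControllability

theorem output_sparse_controllable_sufficient_general {N m n : ℕ}
    (A : Matrix (Fin N) (Fin N) ℝ) (B : Matrix (Fin N) (Fin m) ℝ)
    (C : Matrix (Fin n) (Fin N) ℝ) (s : ℕ) (hs : 0 < s)
    (hrank : (C * ctrbMat A B).rank = n)
    (hbound : min m ((Finset.range N).sup (fun i =>
        (C * A ^ i * ctrbMat A B).rank - (C * A ^ (i + 1) * ctrbMat A B).rank)) ≤ s) :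
    OutputSparseControllable A B C s := by
  have hcap : ∀ e < N, min (Fintype.card (Fin m))
      (finrank ℝ (tailSpan ℝ (fun f => (C * A ^ f * B).col) e) -
        finrank ℝ (tailSpan ℝ (fun f => (C * A ^ f * B).col) (e + 1))) ≤ s := fun e he => by
    rw [Fintype.card_fin, finrank_tailSpan_col, finrank_tailSpan_col]
    exact (min_le_min_left m (le_sup (f := fun i => (C * A ^ i * ctrbMat A B).rank -
      (C * A ^ (i + 1) * ctrbMat A B).rank) (mem_range.2 he))).trans hbound
  obtain ⟨K, hK, D, hD, hcover⟩ := exists_card_le_tailSpan_zero_le_selectedSpan _ hs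
    (fun f hf => tailSpan_col_eq_of_le A B C hf) hcap
  have htop : tailSpan ℝ (fun f => (C * A ^ f * B).col) 0 = ⊤ :=
    eq_top_of_finrank_eq <| by
      rw [finrank_tailSpan_col, pow_zero, Matrix.mul_one, hrank, finrank_fin_fun]
  intro x0 yf
  obtain ⟨u, hu, hsum⟩ := exists_sum_eq_of_mem_selectedSpan
    (hcover (htop ▸ mem_top : yf - C *ᵥ (A ^ K *ᵥ x0) ∈ _))
  refine ⟨K, hK, fun k => u (K - 1 - k), fun k => ?_, ?_⟩
  · exact (Set.ncard_le_ncard (hu _)).trans ((Set.ncard_coe_finset _).trans_le (hD _))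
  · rw [mulVec_add, mulVec_sum_pow_mulVec_rev_eq_sum_smul_col, hsum, sub_add_cancel]

/-- Sufficiency: if `rank(C·W) = n` and `s ≥ min{m, max_{0≤i≤N−1} R_i}` with
`R_i = rank(C A^i W) − rank(C A^{i+1} W)`, then the system is output `s`-sparse
controllable. -/
theorem output_sparse_controllable_sufficient {N m n : ℕ}
    (A : Matrix (Fin N) (Fin N) ℝ) (B : Matrix (Fin N) (Fin m) ℝ)
    (C : Matrix (Fin n) (Fin N) ℝ) (s : ℕ) (hs : 0 < s) (hsm : s ≤ m)
    (hrank : (C * ctrbMat A B).rank = n)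
    (hbound : min m ((Finset.range N).sup (fun i =>
        (C * A ^ i * ctrbMat A B).rank - (C * A ^ (i + 1) * ctrbMat A B).rank)) ≤ s) :
    OutputSparseControllable A B C s :=
  output_sparse_controllable_sufficient_general A B C s hs hrank hbound
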